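/- Let T be an order-N real tensor with dimensions s₁×⋯×s_N, let n ∈ {2,…,N} be such that there exists m ∈ {1,…,N}∖{n} with s_m ≥ s_n, and let u ∈ ℝ^{s_n}. Let V = T ×_n uᵀ be the order-(N−1) tensor obtained by contracting mode n of T with u. Then ‖V‖₂ ≤ ‖u‖₂ ‖T‖₂ and I(V) ≥ ‖u‖₂ I(T); consequently, if u ≠ 0 and I(T) > 0, then κ(V) ≤ κ(T). -/
import Mathlib


open scoped BigOperators

/-- Euclidean (ℓ²) norm of a vector. -/
noncomputable def vnorm {n : ℕ} (v : Fin n → ℝ) : ℝ := Real.sqrt (∑ i, v i ^ 2)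

/-- Frobenius norm: the ℓ² norm of all entries. -/
noncomputable def fnorm {ι : Type*} [Fintype ι] (T : ι → ℝ) : ℝ := Real.sqrt (∑ i, T i ^ 2)

/-- Matrix–vector product. -/
noncomputable def matvec {m n : ℕ} (M : Fin m → Fin n → ℝ) (x : Fin n → ℝ) : Fin m → ℝ :=
  fun i => ∑ j, M i j * x j

/-- Matrix–matrix product. -/
noncomputable def matmul {m n p : ℕ} (A : Fin m → Fin n → ℝ) (B : Fin n → Fin p → ℝ) :
    Fin m → Fin p → ℝ :=
  fun i j => ∑ k, A i k * B k j

/-- Matrix spectral norm. -/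
noncomputable def mnorm {m n : ℕ} (M : Fin m → Fin n → ℝ) : ℝ :=
  sSup {r | ∃ x : Fin n → ℝ, vnorm x = 1 ∧ r = vnorm (matvec M x)}

/-- `I(M)`: the infimum of `‖Mx‖₂` over unit vectors `x`. -/
noncomputable def minf {m n : ℕ} (M : Fin m → Fin n → ℝ) : ℝ :=
  sInf {r | ∃ x : Fin n → ℝ, vnorm x = 1 ∧ r = vnorm (matvec M x)}

/-- Matrix Frobenius norm. -/
noncomputable def mfro {m n : ℕ} (M : Fin m → Fin n → ℝ) : ℝ :=
  Real.sqrt (∑ i, ∑ j, M i j ^ 2)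

/-- The multilinear map `g_T` associated to an order-`(d+1)` tensor `T`;
mode `0` is the output mode, modes `1,…,d` are the input modes. -/
noncomputable def gmap {d : ℕ} {s : Fin (d+1) → ℕ} (T : (∀ i, Fin (s i)) → ℝ)
    (x : ∀ i, Fin (s i) → ℝ) : Fin (s 0) → ℝ :=
  fun i₁ => ∑ j : (∀ i, Fin (s i)),
    if j 0 = i₁ then T j * ∏ k ∈ Finset.univ.erase (0 : Fin (d+1)), x k (j k) else 0

/-- The inputs `x i`, `i ≠ 0`, are all unit vectors. -/
def unitInputs {d : ℕ} {s : Fin (d+1) → ℕ} (x : ∀ i, Fin (s i) → ℝ) : Prop :=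
  ∀ i : Fin (d+1), i ≠ 0 → vnorm (x i) = 1

/-- Tensor spectral norm: supremum of `‖g_T(x₂,…,x_N)‖₂` over unit inputs. -/
noncomputable def tnorm {d : ℕ} {s : Fin (d+1) → ℕ} (T : (∀ i, Fin (s i)) → ℝ) : ℝ :=
  sSup {r | ∃ x : (∀ i, Fin (s i) → ℝ), unitInputs x ∧ r = vnorm (gmap T x)}

/-- `I(T)`: infimum of `‖g_T(x₂,…,x_N)‖₂` over unit inputs. -/
noncomputable def tinf {d : ℕ} {s : Fin (d+1) → ℕ} (T : (∀ i, Fin (s i)) → ℝ) : ℝ :=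
  sInf {r | ∃ x : (∀ i, Fin (s i) → ℝ), unitInputs x ∧ r = vnorm (gmap T x)}

/-- Tensor condition number `κ(T) = ‖T‖₂ / I(T)`. -/
noncomputable def tcond {d : ℕ} {s : Fin (d+1) → ℕ} (T : (∀ i, Fin (s i)) → ℝ) : ℝ :=
  tnorm T / tinf T

/-- Dimensions after replacing the size of mode `n` by `J`. -/
def repl {d : ℕ} (s : Fin (d+1) → ℕ) (n : Fin (d+1)) (J : ℕ) : Fin (d+1) → ℕ :=
  fun i => if i = n then J else s i

/-- Mode-`n` product `T ×ₙ A` with a matrix `A : Fin J → Fin (s n) → ℝ`: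
`(T ×ₙ A)(i₁,…,a,…,i_N) = ∑ₖ T(i₁,…,k,…,i_N) A(a,k)`. -/
noncomputable def modeProd {d : ℕ} {s : Fin (d+1) → ℕ} (T : (∀ i, Fin (s i)) → ℝ)
    (n : Fin (d+1)) {J : ℕ} (A : Fin J → Fin (s n) → ℝ) :
    (∀ i, Fin (repl s n J i)) → ℝ :=
  fun j => ∑ k : Fin (s n),
    T (fun i => if h : i = n then Fin.cast (congrArg s h.symm) k
        else Fin.cast (show repl s n J i = s i by simp [repl, h]) (j i)) *
      A (Fin.cast (show repl s n J n = J by simp [repl]) (j n)) k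

/-- Multilinear transformation of a tensor: `multiProd X B = X ×₁ B₁ ×₂ ⋯ ×_N B_N`. -/
noncomputable def multiProd {d : ℕ} {s R : Fin (d+1) → ℕ}
    (X : (∀ i, Fin (s i)) → ℝ) (B : ∀ l, Fin (R l) → Fin (s l) → ℝ) :
    (∀ l, Fin (R l)) → ℝ :=
  fun j => ∑ k : (∀ l, Fin (s l)), X k * ∏ l, B l (j l) (k l)

/-- Dimensions of `partialContract`: modes in `E` are kept at size `s l`,
the other modes are contracted down to size `R l`. -/
def keepDims {d : ℕ} (s R : Fin (d+1) → ℕ) (E : Finset (Fin (d+1))) : Fin (d+1) → ℕ :=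
  fun l => if l ∈ E then s l else R l

/-- Contract every mode `l ∉ E` of `X` with `(A l)ᵀ`; keep the modes in `E` untouched. -/
noncomputable def partialContract {d : ℕ} {s R : Fin (d+1) → ℕ}
    (X : (∀ i, Fin (s i)) → ℝ) (A : ∀ l, Fin (s l) → Fin (R l) → ℝ)
    (E : Finset (Fin (d+1))) : (∀ l, Fin (keepDims s R E l)) → ℝ :=
  multiProd X (fun l a b =>
    if h : l ∈ E then
      (if b = Fin.cast (show keepDims s R E l = s l by simp [keepDims, h]) a then (1:ℝ) else 0)
    else A l b (Fin.cast (show keepDims s R E l = R l by simp [keepDims, h]) a))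

/-- The order-`(N−1)` tensor `T ×ₙ uᵀ` obtained by contracting mode `n` of `T` with the
vector `u`. -/
noncomputable def vecContract {d : ℕ} {s : Fin (d+2) → ℕ}
    (T : (∀ i : Fin (d+2), Fin (s i)) → ℝ) (n : Fin (d+2)) (u : Fin (s n) → ℝ) :
    (∀ i : Fin (d+1), Fin (s (n.succAbove i))) → ℝ :=
  fun j => ∑ k, T (Fin.insertNth (α := fun i => Fin (s i)) n k j) * u k

section Aux

lemma vnorm_nonneg {m : ℕ} (v : Fin m → ℝ) : 0 ≤ vnorm v := Real.sqrt_nonneg _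

lemma vnorm_smul {m : ℕ} (c : ℝ) (v : Fin m → ℝ) : vnorm (c • v) = |c| * vnorm v := by
  unfold vnorm
  rw [← Real.sqrt_sq_eq_abs, ← Real.sqrt_mul (sq_nonneg c)]
  congr 1
  rw [Finset.mul_sum]
  refine Finset.sum_congr rfl fun i _ => ?_
  simp [mul_pow]

lemma vnorm_eq_zero {m : ℕ} {v : Fin m → ℝ} (h : vnorm v = 0) : v = 0 := by
  have hs : ∑ i, v i ^ 2 = 0 := by
    have h1 : ∑ i, v i ^ 2 ≤ 0 := (Real.sqrt_eq_zero' (x := ∑ i, v i ^ 2)).mp h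
    exact le_antisymm h1 (Finset.sum_nonneg fun i _ => sq_nonneg _)
  funext i
  have := (Finset.sum_eq_zero_iff_of_nonneg (fun i _ => sq_nonneg (v i))).mp hs i
    (Finset.mem_univ i)
  exact pow_eq_zero_iff (two_ne_zero).elim |>.mp this

lemma abs_le_vnorm {m : ℕ} (v : Fin m → ℝ) (a : Fin m) : |v a| ≤ vnorm v := by
  rw [← Real.sqrt_sq_eq_abs]
  exact Real.sqrt_le_sqrt (Finset.single_le_sum (f := fun i => v i ^ 2)
    (fun i _ => sq_nonneg _) (Finset.mem_univ a))

lemma gmap_smul {d : ℕ} {s : Fin (d+1) → ℕ} (c : ℝ) (T : (∀ i, Fin (s i)) → ℝ)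
    (x : ∀ i, Fin (s i) → ℝ) : gmap (c • T) x = c • gmap T x := by
  funext i₁
  simp only [gmap, Pi.smul_apply, smul_eq_mul, Finset.mul_sum]
  refine Finset.sum_congr rfl fun j _ => ?_
  split_ifs <;> ring

lemma vecContract_smul {d : ℕ} {s : Fin (d+2) → ℕ}
    (T : (∀ i : Fin (d+2), Fin (s i)) → ℝ) (n : Fin (d+2)) (c : ℝ) (u : Fin (s n) → ℝ) :
    vecContract T n (c • u) = c • vecContract T n u := by
  funext j
  simp only [vecContract, Pi.smul_apply, smul_eq_mul, Finset.mul_sum]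
  exact Finset.sum_congr rfl fun k _ => by ring

lemma gmap_vecContract_apply {d : ℕ} {s : Fin (d+2) → ℕ}
    (T : (∀ i : Fin (d+2), Fin (s i)) → ℝ) (n : Fin (d+2)) (hn : n ≠ 0)
    (u : Fin (s n) → ℝ) (y : ∀ i : Fin (d+1), Fin (s (n.succAbove i)) → ℝ)
    (i₁ : Fin (s (n.succAbove 0))) :
    gmap (vecContract T n u) y i₁ =
      gmap T (Fin.insertNth (α := fun i => Fin (s i) → ℝ) n u y)
        (Fin.cast (congrArg s (Fin.succAbove_ne_zero_zero hn)) i₁) := by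
  classical
  have h0 : n.succAbove 0 = 0 := Fin.succAbove_ne_zero_zero hn
  set X : ∀ i : Fin (d+2), Fin (s i) → ℝ :=
    Fin.insertNth (α := fun i => Fin (s i) → ℝ) n u y with hX
  set i₁' : Fin (s 0) := Fin.cast (congrArg s h0) i₁ with hi₁'
  set F : (∀ i : Fin (d+2), Fin (s i)) → ℝ := fun J =>
    if J 0 = i₁' then T J * ∏ K ∈ Finset.univ.erase (0 : Fin (d+2)), X K (J K) else 0 with hF
  have hRHS : gmap T X i₁' = ∑ k : Fin (s n), ∑ j : (∀ i : Fin (d+1), Fin (s (n.succAbove i))),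
      F (Fin.insertNth (α := fun i => Fin (s i)) n k j) := by
    rw [show gmap T X i₁' = ∑ J, F J from rfl]
    rw [← Equiv.sum_comp (Fin.insertNthEquiv (fun i => Fin (s i)) n) F]
    rw [Fintype.sum_prod_type]
    rfl
  rw [hRHS, Finset.sum_comm]
  refine Finset.sum_congr rfl fun j _ => ?_
  have hterm : ∀ k : Fin (s n),
      F (Fin.insertNth (α := fun i => Fin (s i)) n k j) =
      if j 0 = i₁ then
        T (Fin.insertNth (α := fun i => Fin (s i)) n k j) *
          (u k * ∏ i ∈ Finset.univ.erase (0 : Fin (d+1)), y i (j i)) else 0 := by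
    intro k
    set J : ∀ i : Fin (d+2), Fin (s i) := Fin.insertNth (α := fun i => Fin (s i)) n k j with hJ
    have hval : (J 0).val = (j 0).val := by
      have h1 : (fun t : Fin (d+2) => (J t).val) (n.succAbove 0)
          = (fun t : Fin (d+2) => (J t).val) 0 :=
        congrArg (fun t : Fin (d+2) => (J t).val) h0
      have h2 : J (n.succAbove 0) = j 0 := by
        rw [hJ]; exact Fin.insertNth_apply_succAbove (α := fun i => Fin (s i)) n k j 0
      simpa [h2] using h1.symm
    have hcond : (J 0 = i₁') ↔ (j 0 = i₁) := by
      rw [Fin.ext_iff, Fin.ext_iff, hi₁', Fin.coe_cast, hval]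
    have hprod : ∏ K ∈ Finset.univ.erase (0 : Fin (d+2)), X K (J K) =
        u k * ∏ i ∈ Finset.univ.erase (0 : Fin (d+1)), y i (j i) := by
      set f : Fin (d+2) → ℝ := fun K => if K = 0 then 1 else X K (J K) with hf
      have e1 : ∏ K ∈ Finset.univ.erase (0 : Fin (d+2)), X K (J K)
          = ∏ K ∈ Finset.univ.erase (0 : Fin (d+2)), f K :=
        Finset.prod_congr rfl fun K hK => by
          rw [hf]; simp only [if_neg (Finset.ne_of_mem_erase hK)]
      have e2 : ∏ K ∈ Finset.univ.erase (0 : Fin (d+2)), f K = ∏ K, f K :=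
        Finset.prod_erase _ (by simp [hf])
      have e3 : ∏ K, f K = f n * ∏ i, f (n.succAbove i) := Fin.prod_univ_succAbove f n
      have e4 : f n = u k := by
        rw [hf]
        simp only [if_neg hn, hX, hJ, Fin.insertNth_apply_same]
      have e5 : ∏ i, f (n.succAbove i) =
          ∏ i ∈ Finset.univ.erase (0 : Fin (d+1)), y i (j i) := by
        have e6 : ∀ i : Fin (d+1), f (n.succAbove i) = if i = 0 then 1 else y i (j i) := by
          intro i
          by_cases hi : i = 0
          · simp [hf, hi, h0]
          · simp only [hf]
            rw [if_neg (Fin.succAbove_ne_zero hn hi), if_neg hi, hX, hJ]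
            rw [Fin.insertNth_apply_succAbove, Fin.insertNth_apply_succAbove]
        rw [Finset.prod_congr rfl fun i _ => e6 i]
        rw [← Finset.prod_erase Finset.univ (f := fun i : Fin (d+1) =>
          if i = 0 then 1 else y i (j i)) (a := 0) (by simp)]
        exact Finset.prod_congr rfl fun i hi => by
          simp only [if_neg (Finset.ne_of_mem_erase hi)]
      rw [e1, e2, e3, e4, e5]
    rw [hF]
    simp only [← hJ]
    by_cases hj : j 0 = i₁
    · rw [if_pos (hcond.mpr hj), if_pos hj, hprod]
    · rw [if_neg (fun hc => hj (hcond.mp hc)), if_neg hj]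
  rw [Finset.sum_congr rfl fun k _ => hterm k]
  by_cases hj : j 0 = i₁
  · simp only [if_pos hj, vecContract]
    rw [Finset.sum_mul]
    exact Finset.sum_congr rfl fun k _ => by ring
  · simp [hj]

lemma vnorm_gmap_vecContract {d : ℕ} {s : Fin (d+2) → ℕ}
    (T : (∀ i : Fin (d+2), Fin (s i)) → ℝ) (n : Fin (d+2)) (hn : n ≠ 0)
    (u : Fin (s n) → ℝ) (y : ∀ i : Fin (d+1), Fin (s (n.succAbove i)) → ℝ) :
    vnorm (gmap (vecContract T n u) y) =
      vnorm (gmap T (Fin.insertNth (α := fun i => Fin (s i) → ℝ) n u y)) := by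
  have h0 : n.succAbove 0 = 0 := Fin.succAbove_ne_zero_zero hn
  unfold vnorm
  congr 1
  refine Fintype.sum_equiv (finCongr (congrArg s h0)) _ _ fun i => ?_
  rw [gmap_vecContract_apply T n hn u y i, finCongr_apply]

lemma unitInputs_insertNth {d : ℕ} {s : Fin (d+2) → ℕ} (n : Fin (d+2)) (hn : n ≠ 0)
    (w : Fin (s n) → ℝ) (hw : vnorm w = 1)
    (y : ∀ i : Fin (d+1), Fin (s (n.succAbove i)) → ℝ) (hy : unitInputs y) :
    unitInputs (Fin.insertNth (α := fun i => Fin (s i) → ℝ) n w y) := by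
  intro i hi
  rcases eq_or_ne i n with rfl | hin
  · rw [Fin.insertNth_apply_same]; exact hw
  · obtain ⟨j, rfl⟩ := Fin.exists_succAbove_eq hin
    rw [Fin.insertNth_apply_succAbove]
    refine hy j fun hj => hi ?_
    rw [hj]
    exact Fin.succAbove_ne_zero_zero hn

lemma vnorm_gmap_le {d : ℕ} {s : Fin (d+1) → ℕ} (T : (∀ i, Fin (s i)) → ℝ)
    (x : ∀ i, Fin (s i) → ℝ) (hx : unitInputs x) :
    vnorm (gmap T x) ≤
      Real.sqrt (∑ _i : Fin (s 0), (∑ j : (∀ i, Fin (s i)), |T j|) ^ 2) := by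
  apply Real.sqrt_le_sqrt
  refine Finset.sum_le_sum fun i _ => ?_
  have habs : |gmap T x i| ≤ ∑ j, |T j| := by
    refine (Finset.abs_sum_le_sum_abs _ _).trans (Finset.sum_le_sum fun j _ => ?_)
    split_ifs with h
    · rw [abs_mul]
      have hP : |∏ k ∈ Finset.univ.erase (0 : Fin (d+1)), x k (j k)| ≤ 1 := by
        rw [Finset.abs_prod]
        refine Finset.prod_le_one (fun k _ => abs_nonneg _) fun k hk => ?_
        exact (abs_le_vnorm _ _).trans (le_of_eq (hx k (Finset.ne_of_mem_erase hk)))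
      calc |T j| * |∏ k ∈ Finset.univ.erase (0 : Fin (d+1)), x k (j k)|
          ≤ |T j| * 1 := mul_le_mul_of_nonneg_left hP (abs_nonneg _)
        _ = |T j| := mul_one _
    · simp
  calc (gmap T x i) ^ 2 = |gmap T x i| ^ 2 := (sq_abs _).symm
    _ ≤ (∑ j, |T j|) ^ 2 := pow_le_pow_left₀ (abs_nonneg _) habs 2

end Aux


/-- Corollary A.2 of the paper. For an order-`N` tensor `T` (`N = d+2`,
mode `0` is the output mode), a non-output mode `n` such that some other mode `m` has
`s m ≥ s n`, and a vector `u ∈ ℝ^{s n}`, the tensor `V = T ×ₙ uᵀ` satisfies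
`‖V‖₂ ≤ ‖u‖₂‖T‖₂` and `I(V) ≥ ‖u‖₂ I(T)`; consequently if `u ≠ 0` and `I(T) > 0`
then `κ(V) ≤ κ(T)`. -/
theorem tensor_cond_vec_contract {d : ℕ} {s : Fin (d+2) → ℕ}
    (T : (∀ i : Fin (d+2), Fin (s i)) → ℝ)
    (n : Fin (d+2)) (hn : n ≠ 0)
    (hm : ∃ m : Fin (d+2), m ≠ n ∧ s n ≤ s m)
    (u : Fin (s n) → ℝ) :
    tnorm (vecContract T n u) ≤ vnorm u * tnorm T ∧
    vnorm u * tinf T ≤ tinf (vecContract T n u) ∧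
    (u ≠ 0 → 0 < tinf T → tcond (vecContract T n u) ≤ tcond T) := by
    classical
  by_cases hu : u = 0
  · subst hu
    have hvu : vnorm (0 : Fin (s n) → ℝ) = 0 := by
      unfold vnorm; simp
    refine ⟨?_, ?_, fun h => absurd rfl h⟩
    · rw [hvu, zero_mul]
      unfold tnorm
      refine Real.sSup_le (fun r hr => ?_) le_rfl
      obtain ⟨y, hy, rfl⟩ := hr
      have hV0 : vecContract T n (0 : Fin (s n) → ℝ) = 0 := by
        funext j; simp [vecContract]
      have hg0 : gmap (vecContract T n (0 : Fin (s n) → ℝ)) y = 0 := by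
        rw [hV0]; funext i; simp [gmap]
      rw [hg0]
      unfold vnorm
      simp
    · rw [hvu, zero_mul]
      unfold tinf
      exact Real.sInf_nonneg fun r hr => by
        obtain ⟨y, -, rfl⟩ := hr; exact vnorm_nonneg _
  · set c := vnorm u with hc
    have hc0 : 0 < c := lt_of_le_of_ne (vnorm_nonneg u) fun h => hu (vnorm_eq_zero h.symm)
    set w : Fin (s n) → ℝ := c⁻¹ • u with hw
    have hw1 : vnorm w = 1 := by
      rw [hw, vnorm_smul, abs_inv, abs_of_pos hc0, ← hc, inv_mul_cancel₀ hc0.ne']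
    have hcw : c • w = u := by
      rw [hw, smul_smul, mul_inv_cancel₀ hc0.ne', one_smul]
    have hkey : ∀ y : (∀ i : Fin (d+1), Fin (s (n.succAbove i)) → ℝ),
        vnorm (gmap (vecContract T n u) y) =
          c * vnorm (gmap T (Fin.insertNth (α := fun i => Fin (s i) → ℝ) n w y)) := by
      intro y
      rw [← vnorm_gmap_vecContract T n hn w y, ← hcw, vecContract_smul, gmap_smul,
        vnorm_smul, abs_of_pos hc0]
    have hbdd : BddAbove {r | ∃ x : (∀ i : Fin (d+2), Fin (s i) → ℝ),
        unitInputs x ∧ r = vnorm (gmap T x)} := by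
      refine ⟨Real.sqrt (∑ _i : Fin (s 0), (∑ j : (∀ i : Fin (d+2), Fin (s i)), |T j|) ^ 2),
        fun r hr => ?_⟩
      obtain ⟨x, hx, rfl⟩ := hr
      exact vnorm_gmap_le T x hx
    have hbdb : BddBelow {r | ∃ x : (∀ i : Fin (d+2), Fin (s i) → ℝ),
        unitInputs x ∧ r = vnorm (gmap T x)} := by
      refine ⟨0, fun r hr => ?_⟩
      obtain ⟨x, -, rfl⟩ := hr
      exact vnorm_nonneg _
    have htn : 0 ≤ tnorm T := by
      unfold tnorm
      exact Real.sSup_nonneg fun r hr => by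
        obtain ⟨x, -, rfl⟩ := hr; exact vnorm_nonneg _
    have part1 : tnorm (vecContract T n u) ≤ c * tnorm T := by
      unfold tnorm
      refine Real.sSup_le (fun r hr => ?_) (mul_nonneg hc0.le htn)
      obtain ⟨y, hy, rfl⟩ := hr
      rw [hkey y]
      refine mul_le_mul_of_nonneg_left ?_ hc0.le
      exact le_csSup hbdd ⟨_, unitInputs_insertNth n hn w hw1 y hy, rfl⟩
    have part2 : c * tinf T ≤ tinf (vecContract T n u) := by
      by_cases hne : {r | ∃ y : (∀ i : Fin (d+1), Fin (s (n.succAbove i)) → ℝ),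
          unitInputs y ∧ r = vnorm (gmap (vecContract T n u) y)}.Nonempty
      · unfold tinf
        refine le_csInf hne fun r hr => ?_
        obtain ⟨y, hy, rfl⟩ := hr
        rw [hkey y]
        refine mul_le_mul_of_nonneg_left ?_ hc0.le
        exact csInf_le hbdb ⟨_, unitInputs_insertNth n hn w hw1 y hy, rfl⟩
      · have hTempty : {r | ∃ x : (∀ i : Fin (d+2), Fin (s i) → ℝ),
            unitInputs x ∧ r = vnorm (gmap T x)} = ∅ := by
          rw [Set.eq_empty_iff_forall_notMem]
          rintro r ⟨x, hx, rfl⟩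
          exact hne ⟨vnorm (gmap (vecContract T n u) fun i => x (n.succAbove i)),
            fun i => x (n.succAbove i),
            fun i hi => hx _ (Fin.succAbove_ne_zero hn hi), rfl⟩
        have hVempty : {r | ∃ y : (∀ i : Fin (d+1), Fin (s (n.succAbove i)) → ℝ),
            unitInputs y ∧ r = vnorm (gmap (vecContract T n u) y)} = ∅ :=
          Set.not_nonempty_iff_eq_empty.mp hne
        unfold tinf
        rw [hTempty, hVempty, Real.sInf_empty, mul_zero]
    refine ⟨part1, part2, fun _ hT => ?_⟩
    have hVinf : 0 < tinf (vecContract T n u) := lt_of_lt_of_le (mul_pos hc0 hT) part2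
    unfold tcond
    calc tnorm (vecContract T n u) / tinf (vecContract T n u)
        ≤ (c * tnorm T) / (c * tinf T) :=
          div_le_div₀ (mul_nonneg hc0.le htn) part1 (mul_pos hc0 hT) part2
      _ = tnorm T / tinf T := mul_div_mul_left _ _ hc0.ne'
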